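/- arXiv:1512.03337 — 7 statements merged into one kernel-verified Lean document; each statement's English description precedes it below -/
import Mathlib

section
/- Let n be a nonempty finite type and H : Matrix n n ℝ a real square matrix such that for every real t ≥ 0 the matrix exponential exp(t • H) is stochastic. Then H has nonnegative off-diagonal entries (H i j ≥ 0 whenever i ≠ j) and every column of H sums to zero (∑ i, H i j = 0 for every j). -/
/-! The entries of `exp (t • H)` have right derivative `H` at `t = 0`. An off-diagonal entry
vanishes at `0` and is nonnegative for `t ≥ 0`, so its derivative is nonnegative; a column sum is
constantly `1` for `t ≥ 0`, so its derivative vanishes. -/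

/-- A real square matrix is stochastic if its entries are nonnegative and
each column sums to 1. -/
def IsStochastic {n : Type*} [Fintype n] (A : Matrix n n ℝ) : Prop :=
  (∀ i j, 0 ≤ A i j) ∧ ∀ j, ∑ i, A i j = 1

open Set

theorem HasDerivWithinAt.nonneg_of_isMinOn_Ici {f : ℝ → ℝ} {f' a : ℝ}
    (hf : HasDerivWithinAt f f' (Ici a) a) (hmin : IsMinOn f (Ici a) a) : 0 ≤ f' := by
  have hcone : (1 : ℝ) ∈ posTangentConeAt (Ici a) a :=
    mem_posTangentConeAt_of_segment_subset <|
      (segment_subset_Icc (by simp)).trans Icc_subset_Ici_self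
  simpa using hmin.localize.hasFDerivWithinAt_nonneg hf hcone

theorem HasDerivWithinAt.eq_zero_of_eqOn_Ici {f : ℝ → ℝ} {f' a c : ℝ}
    (hf : HasDerivWithinAt f f' (Ici a) a) (hc : EqOn f (fun _ ↦ c) (Ici a)) : f' = 0 :=
  (uniqueDiffWithinAt_Ici a).eq_deriv _ hf <|
    (hasDerivWithinAt_const a _ c).congr hc (hc self_mem_Ici)

namespace Matrix

-- Any algebra norm would do: it only serves to differentiate `exp`, which does not depend on it.
attribute [local instance] Matrix.linftyOpNormedRing Matrix.linftyOpNormedAlgebra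

variable {n : Type*} [Fintype n] [DecidableEq n]

theorem hasDerivAt_exp_smul_apply (H : Matrix n n ℝ) (i j : n) (t : ℝ) :
    HasDerivAt (fun u : ℝ ↦ NormedSpace.exp (u • H) i j)
      ((NormedSpace.exp (t • H) * H) i j) t :=
  (LinearMap.toContinuousLinearMap (entryLinearMap ℝ ℝ i j)).hasFDerivAt.comp_hasDerivAt t
    (hasDerivAt_exp_smul_const H t)

end Matrix

theorem offdiag_nonneg_and_columns_sum_zero_of_exp_stochastic_general
    {n : Type*} [Fintype n] [DecidableEq n] (H : Matrix n n ℝ)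
    (h : ∀ t : ℝ, 0 ≤ t → IsStochastic (NormedSpace.exp (t • H))) :
    (∀ i j, i ≠ j → 0 ≤ H i j) ∧ ∀ j, ∑ i, H i j = 0 := by
  have hderiv (i j : n) :
      HasDerivWithinAt (fun t : ℝ ↦ NormedSpace.exp (t • H) i j) (H i j) (Ici 0) 0 := by
    simpa using (Matrix.hasDerivAt_exp_smul_apply H i j 0).hasDerivWithinAt
  refine ⟨fun i j hij ↦ (hderiv i j).nonneg_of_isMinOn_Ici fun t ht ↦ ?_, fun j ↦ ?_⟩
  · simpa [Matrix.one_apply_ne hij] using (h t ht).1 i j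
  · exact (HasDerivWithinAt.fun_sum fun i _ ↦ hderiv i j).eq_zero_of_eqOn_Ici
      fun t ht ↦ (h t ht).2 j

theorem offdiag_nonneg_and_columns_sum_zero_of_exp_stochastic
    {n : Type*} [Fintype n] [DecidableEq n] [Nonempty n] (H : Matrix n n ℝ)
    (h : ∀ t : ℝ, 0 ≤ t → IsStochastic (NormedSpace.exp (t • H))) :
    (∀ i j, i ≠ j → 0 ≤ H i j) ∧ ∀ j, ∑ i, H i j = 0 :=
  offdiag_nonneg_and_columns_sum_zero_of_exp_stochastic_general H h
end

section
/- Let n be a nonempty finite type and H : Matrix n n ℝ such that for every real t ≥ 0 the matrix exp(t • H) is stochastic. Suppose f : n → ℝ satisfies f i > 0 for all i, ∑ i, f i = 1, and H.mulVec f = λ • f for some real number λ. Then λ = 0. -/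
/-!
Evaluating the hypothesis at `t = 1`: the eigenvector equation `H f = λ f` exponentiates to
`exp H f = e^λ f`, while a stochastic matrix preserves the total mass `∑ i, f i = 1`.
Hence `e^λ = 1`, i.e. `λ = 0`.
-/

namespace Matrix

variable {n : Type*} [Fintype n] [DecidableEq n]

theorem pow_mulVec_of_mulVec_eq_smul {R : Type*} [CommSemiring R] {H : Matrix n n R}
    {v : n → R} {μ : R} (hv : H *ᵥ v = μ • v) (k : ℕ) : (H ^ k) *ᵥ v = μ ^ k • v := by
  induction k with
  | zero => simp
  | succ k ih => rw [pow_succ, ← mulVec_mulVec, hv, mulVec_smul, ih, smul_smul, pow_succ']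

theorem exp_mulVec_of_mulVec_eq_smul {H : Matrix n n ℝ} {v : n → ℝ} {μ : ℝ}
    (hv : H *ᵥ v = μ • v) : NormedSpace.exp H *ᵥ v = Real.exp μ • v := by
  -- `NormedSpace.exp` is norm-independent; a norm is chosen only to access the exponential series.
  let _ : NormedRing (Matrix n n ℝ) := Matrix.linftyOpNormedRing
  let _ : NormedAlgebra ℝ (Matrix n n ℝ) := Matrix.linftyOpNormedAlgebra
  have hmap : HasSum (fun k => ((k.factorial : ℝ)⁻¹ • H ^ k) *ᵥ v) (NormedSpace.exp H *ᵥ v) :=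
    (NormedSpace.exp_series_hasSum_exp' (𝕂 := ℝ) H).map (mulVec.addMonoidHomLeft v)
      (continuous_id.matrix_mulVec continuous_const)
  have hscalar : HasSum (fun k => ((k.factorial : ℝ)⁻¹ * μ ^ k) • v) (Real.exp μ • v) := by
    simpa [Real.exp_eq_exp_ℝ] using (NormedSpace.exp_series_hasSum_exp' (𝕂 := ℝ) μ).smul_const v
  refine hmap.unique (hscalar.congr_fun fun k => ?_)
  rw [smul_mulVec, pow_mulVec_of_mulVec_eq_smul hv, smul_smul]

end Matrix

open Matrix in
theorem IsStochastic.sum_mulVec {n : Type*} [Fintype n] {A : Matrix n n ℝ}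
    (hA : IsStochastic A) (v : n → ℝ) : ∑ i, (A *ᵥ v) i = ∑ i, v i := by
  have hcol : 1 ᵥ* A = 1 := funext fun j => by
    simpa [Matrix.vecMul, dotProduct] using hA.2 j
  simpa [dotProduct, hcol] using Matrix.dotProduct_mulVec 1 A v

theorem eigenvalue_zero_of_positive_eigenvector_general
    {n : Type*} [Fintype n] [DecidableEq n] (H : Matrix n n ℝ)
    (h : ∀ t : ℝ, 0 ≤ t → IsStochastic (NormedSpace.exp (t • H)))
    (f : n → ℝ) (hfsum : ∑ i, f i = 1)
    (lam : ℝ) (heig : H.mulVec f = lam • f) :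
    lam = 0 := by
  have hstoch : IsStochastic (NormedSpace.exp H) := by simpa using h 1 zero_le_one
  have hmass := hstoch.sum_mulVec f
  rw [Matrix.exp_mulVec_of_mulVec_eq_smul heig] at hmass
  simp only [Pi.smul_apply, smul_eq_mul, ← Finset.mul_sum, hfsum, mul_one] at hmass
  exact Real.exp_eq_one_iff lam |>.mp hmass

theorem eigenvalue_zero_of_positive_eigenvector
    {n : Type*} [Fintype n] [DecidableEq n] [Nonempty n] (H : Matrix n n ℝ)
    (h : ∀ t : ℝ, 0 ≤ t → IsStochastic (NormedSpace.exp (t • H)))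
    (f : n → ℝ) (hfpos : ∀ i, 0 < f i) (hfsum : ∑ i, f i = 1)
    (lam : ℝ) (heig : H.mulVec f = lam • f) :
    lam = 0 :=
  eigenvalue_zero_of_positive_eigenvector_general H h f hfsum lam heig
end

section
/- Let n be a nonempty finite type and H : Matrix n n ℝ such that for every real t ≥ 0 the matrix exp(t • H) is stochastic. Then every complex eigenvalue μ of H (that is, every μ in the spectrum over ℂ of the complexified matrix H.map Complex.ofReal) satisfies either μ = 0 or Re(μ) < 0. -/
/-!
Differentiating `exp (t • H)` at `t = 0⁺` shows that `H` is a rate matrix: its off-diagonal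
entries are nonnegative (the entries of `exp (t • H) - 1` off the diagonal are) and its columns
sum to `0` (the column sums of `exp (t • H)` are constant). Gershgorin's theorem applied to the
columns of such a matrix puts every eigenvalue in a closed disc centred at some `H k k ≤ 0` of
radius `-H k k`, and such a disc meets the closed right half-plane only at `0`.
-/

open Filter Topology
open scoped Matrix

theorem HasDerivAt.nonneg_of_forall_lt_le {f : ℝ → ℝ} {f' a : ℝ} (hf : HasDerivAt f f' a)
    (h : ∀ t, a < t → f a ≤ f t) : 0 ≤ f' := by
  have hslope : Tendsto (slope f a) (𝓝[>] a) (𝓝 f') :=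
    hf.tendsto_slope.mono_left (nhdsWithin_mono _ fun _ ht => ne_of_gt ht)
  refine ge_of_tendsto hslope ?_
  filter_upwards [self_mem_nhdsWithin] with t ht
  rw [slope_def_field]
  exact div_nonneg (sub_nonneg.2 (h t ht)) (sub_nonneg.2 (le_of_lt ht))

theorem hasDerivAt_exp_smul_apply_zero {n : Type*} [Fintype n] [DecidableEq n]
    (H : Matrix n n ℝ) (i j : n) :
    HasDerivAt (fun t : ℝ => NormedSpace.exp (t • H) i j) (H i j) 0 := by
  -- `NormedSpace.exp` does not depend on the norm, so any algebra norm will do.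
  let _ : NormedRing (Matrix n n ℝ) := Matrix.linftyOpNormedRing
  let _ : NormedAlgebra ℝ (Matrix n n ℝ) := Matrix.linftyOpNormedAlgebra
  have hexp := hasDerivAt_exp_smul_const (𝕂 := ℝ) H 0
  rw [zero_smul, NormedSpace.exp_zero, one_mul] at hexp
  exact (Matrix.entryLinearMap ℝ ℝ i j).toContinuousLinearMap.hasFDerivAt.comp_hasDerivAt 0 hexp

section ExpStochastic

variable {n : Type*} [Fintype n] [DecidableEq n] {H : Matrix n n ℝ}

theorem apply_nonneg_of_exp_smul_isStochastic
    (h : ∀ t : ℝ, 0 ≤ t → IsStochastic (NormedSpace.exp (t • H))) {i j : n} (hij : i ≠ j) :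
    0 ≤ H i j := by
  refine (hasDerivAt_exp_smul_apply_zero H i j).nonneg_of_forall_lt_le fun t ht => ?_
  simpa [NormedSpace.exp_zero, Matrix.one_apply_ne hij] using (h t ht.le).1 i j

theorem sum_apply_eq_zero_of_exp_smul_isStochastic
    (h : ∀ t : ℝ, 0 ≤ t → IsStochastic (NormedSpace.exp (t • H))) (j : n) :
    ∑ i, H i j = 0 := by
  have hsum : HasDerivAt (fun t : ℝ => ∑ i, NormedSpace.exp (t • H) i j) (∑ i, H i j) 0 :=
    HasDerivAt.fun_sum fun i _ => hasDerivAt_exp_smul_apply_zero H i j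
  have hconst : ∀ t : ℝ, 0 ≤ t → ∑ i, NormedSpace.exp (t • H) i j = 1 := fun t ht => (h t ht).2 j
  refine le_antisymm ?_ (hsum.nonneg_of_forall_lt_le fun t ht => ?_)
  · refine neg_nonneg.1 (hsum.neg.nonneg_of_forall_lt_le fun t ht => ?_)
    simp only [Pi.neg_apply, hconst t ht.le, hconst 0 le_rfl, le_refl]
  · rw [hconst t ht.le, hconst 0 le_rfl]

theorem sum_erase_apply_eq_neg_of_exp_smul_isStochastic
    (h : ∀ t : ℝ, 0 ≤ t → IsStochastic (NormedSpace.exp (t • H))) (j : n) :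
    ∑ i ∈ Finset.univ.erase j, H i j = -H j j := by
  have hcol := sum_apply_eq_zero_of_exp_smul_isStochastic h j
  rw [← Finset.add_sum_erase _ _ (Finset.mem_univ j)] at hcol
  linarith

end ExpStochastic

theorem Matrix.exists_mem_closedBall_col_of_mem_spectrum {K n : Type*} [NormedField K]
    [Fintype n] [DecidableEq n] {A : Matrix n n K} {μ : K} (hμ : μ ∈ spectrum K A) :
    ∃ k, μ ∈ Metric.closedBall (A k k) (∑ i ∈ Finset.univ.erase k, ‖A i k‖) := by
  have hμT : μ ∈ spectrum K Aᵀ := by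
    rwa [Matrix.mem_spectrum_iff_isRoot_charpoly, Matrix.charpoly_transpose,
      ← Matrix.mem_spectrum_iff_isRoot_charpoly]
  exact eigenvalue_mem_ball <| Module.End.hasEigenvalue_iff_mem_spectrum.2 <|
    (Matrix.spectrum_toLin' Aᵀ).symm ▸ hμT

theorem Complex.eq_zero_or_re_neg_of_norm_sub_ofReal_le {μ : ℂ} {a : ℝ} (hμ : ‖μ - a‖ ≤ -a) :
    μ = 0 ∨ μ.re < 0 := by
  refine (lt_or_ge μ.re 0).symm.imp_left fun hre => ?_
  have hsq : Complex.normSq (μ - a) ≤ a ^ 2 := by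
    rw [Complex.normSq_eq_norm_sq]
    nlinarith [norm_nonneg (μ - a)]
  have ha : a ≤ 0 := by linarith [norm_nonneg (μ - a)]
  rw [Complex.normSq_apply, Complex.sub_re, Complex.sub_im, Complex.ofReal_re,
    Complex.ofReal_im, sub_zero] at hsq
  have hre0 : μ.re = 0 := by nlinarith
  have him0 : μ.im = 0 := by nlinarith
  exact Complex.ext hre0 him0

theorem eigenvalues_zero_or_neg_re_of_exp_stochastic_general
    {n : Type*} [Fintype n] [DecidableEq n] (H : Matrix n n ℝ)
    (h : ∀ t : ℝ, 0 ≤ t → IsStochastic (NormedSpace.exp (t • H))) :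
    ∀ μ ∈ spectrum ℂ (H.map Complex.ofReal), μ = 0 ∨ μ.re < 0 := by
  intro μ hμ
  obtain ⟨k, hk⟩ := Matrix.exists_mem_closedBall_col_of_mem_spectrum hμ
  have hradius : ∑ i ∈ Finset.univ.erase k, ‖(H.map Complex.ofReal) i k‖ = -H k k := by
    rw [← sum_erase_apply_eq_neg_of_exp_smul_isStochastic h k]
    refine Finset.sum_congr rfl fun i hi => ?_
    rw [Matrix.map_apply, Complex.norm_real, Real.norm_of_nonneg
      (apply_nonneg_of_exp_smul_isStochastic h (Finset.ne_of_mem_erase hi))]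
  rw [hradius, Metric.mem_closedBall, dist_eq_norm] at hk
  exact Complex.eq_zero_or_re_neg_of_norm_sub_ofReal_le hk

theorem eigenvalues_zero_or_neg_re_of_exp_stochastic
    {n : Type*} [Fintype n] [DecidableEq n] [Nonempty n] (H : Matrix n n ℝ)
    (h : ∀ t : ℝ, 0 ≤ t → IsStochastic (NormedSpace.exp (t • H))) :
    ∀ μ ∈ spectrum ℂ (H.map Complex.ofReal), μ = 0 ∨ μ.re < 0 :=
  eigenvalues_zero_or_neg_re_of_exp_stochastic_general H h
end

section
/- Let n be a finite type and A : Matrix n n ℂ a complex square matrix all of whose eigenvalues (elements of its spectrum over ℂ) have strictly negative real part. Then exp(t • A) tends to the zero matrix as the real parameter t tends to +∞. -/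
/-!
Over `ℂ` the generalized eigenvectors of `A` span `n → ℂ`, so it suffices
to show `exp (t • A) v → 0` for `v` with `(A - μ)ᵏ v = 0`, where `μ ∈ spectrum ℂ A`. Writing
`A = μ + N`, the exponential series of `t • N` terminates on such a `v`, giving
`exp (t • A) v = e^{tμ} ∑_{j<k} tʲ/j! Nʲ v`; each term tends to `0` because `Re μ < 0` makes
`e^{tμ}` beat every polynomial in `t`.
-/

open Filter Topology

theorem Complex.tendsto_pow_mul_exp_mul_atTop_nhds_zero {μ : ℂ} (hμ : μ.re < 0) (j : ℕ) :
    Tendsto (fun t : ℝ => (t : ℂ) ^ j * Complex.exp (t * μ)) atTop (𝓝 0) := by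
  have hreal : Tendsto (fun t : ℝ => t ^ (j : ℝ) * Real.exp (-(-μ.re) * t)) atTop (𝓝 0) :=
    tendsto_rpow_mul_exp_neg_mul_atTop_nhds_zero j (-μ.re) (neg_pos.mpr hμ)
  refine squeeze_zero_norm' ?_ hreal
  filter_upwards [eventually_ge_atTop 0] with t ht
  rw [norm_mul, norm_pow, Complex.norm_exp, Complex.norm_real, Real.norm_of_nonneg ht,
    Real.rpow_natCast, neg_neg, mul_comm μ.re]
  simp

namespace NormedSpace

variable {𝕂 𝔸 : Type*} [RCLike 𝕂] [NormedRing 𝔸] [NormedAlgebra 𝕂 𝔸] [NormedAlgebra ℚ 𝔸]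
  [CompleteSpace 𝔸]

theorem exp_eq_exp_smul_exp_sub_algebraMap (a : 𝔸) (z : 𝕂) :
    exp a = exp z • exp (a - algebraMap 𝕂 𝔸 z) := by
  rw [← algebraMap_smul 𝔸, smul_eq_mul, Algebra.commutes, algebraMap_exp_comm,
    ← exp_add_of_commute (Algebra.commutes z _).symm, sub_add_cancel]

end NormedSpace

theorem Module.End.mem_spectrum_of_mem_maxGenEigenspace {K V : Type*} [Field K] [AddCommGroup V]
    [Module K V] [FiniteDimensional K V] {f : Module.End K V} {μ : K} {v : V}
    (hv : v ∈ f.maxGenEigenspace μ) (hv0 : v ≠ 0) : μ ∈ spectrum K f :=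
  Module.End.hasEigenvalue_iff_mem_spectrum.mp
    (HasUnifEigenvalue.lt zero_lt_one ((Submodule.ne_bot_iff _).mpr ⟨v, hv, hv0⟩))

namespace Matrix

variable {n 𝕂 : Type*} [Fintype n] [DecidableEq n] [RCLike 𝕂]

theorem exp_mulVec_eq_sum_of_pow_mulVec_eq_zero {N : Matrix n n 𝕂} {v : n → 𝕂} {k : ℕ}
    (hk : N ^ k *ᵥ v = 0) :
    NormedSpace.exp N *ᵥ v = ∑ j ∈ Finset.range k, (j.factorial⁻¹ : 𝕂) • (N ^ j *ᵥ v) := by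
  -- Any matrix norm inducing the product topology gives access to the Banach-algebra lemmas.
  open scoped Norms.Operator in
  have hsum : HasSum (fun j => ((j.factorial⁻¹ : 𝕂) • N ^ j) *ᵥ v) (NormedSpace.exp N *ᵥ v) :=
    (NormedSpace.exp_series_hasSum_exp' (𝕂 := 𝕂) N).map
      (mulVec.addMonoidHomLeft v) (continuous_id.matrix_mulVec continuous_const)
  simp only [smul_mulVec] at hsum
  refine hsum.unique (hasSum_sum_of_ne_finset_zero fun j hj => ?_)
  obtain ⟨i, rfl⟩ := Nat.exists_eq_add_of_le (not_lt.mp (Finset.mem_range.not.mp hj))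
  rw [add_comm, pow_add, ← mulVec_mulVec, hk, mulVec_zero, smul_zero]

theorem exp_eq_exp_smul_exp_sub_smul_one (A : Matrix n n 𝕂) (z : 𝕂) :
    NormedSpace.exp A = NormedSpace.exp z • NormedSpace.exp (A - z • 1) := by
  open scoped Norms.Operator in
  rw [← Algebra.algebraMap_eq_smul_one]
  exact NormedSpace.exp_eq_exp_smul_exp_sub_algebraMap A z

theorem tendsto_exp_smul_mulVec_of_pow_sub_smul_one_mulVec_eq_zero {A : Matrix n n ℂ} {μ : ℂ}
    (hμ : μ.re < 0) {v : n → ℂ} {k : ℕ} (hv : (A - μ • 1) ^ k *ᵥ v = 0) :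
    Tendsto (fun t : ℝ => NormedSpace.exp (t • A) *ᵥ v) atTop (𝓝 0) := by
  set N := A - μ • 1
  have hexp (t : ℝ) : NormedSpace.exp (t • A) *ᵥ v = ∑ j ∈ Finset.range k,
      ((t : ℂ) ^ j * Complex.exp (t * μ)) • ((j.factorial⁻¹ : ℂ) • (N ^ j *ᵥ v)) := by
    have hkt : ((t : ℂ) • N) ^ k *ᵥ v = 0 := by rw [smul_pow, smul_mulVec, hv, smul_zero]
    have hsplit : (t : ℂ) • A - ((t : ℂ) * μ) • 1 = (t : ℂ) • N := by
      rw [smul_sub, mul_smul]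
    rw [← Complex.coe_smul, exp_eq_exp_smul_exp_sub_smul_one _ ((t : ℂ) * μ),
      hsplit, smul_mulVec, exp_mulVec_eq_sum_of_pow_mulVec_eq_zero hkt, Finset.smul_sum,
      ← Complex.exp_eq_exp_ℂ]
    refine Finset.sum_congr rfl fun j _ => ?_
    rw [smul_pow, smul_mulVec, smul_comm, smul_smul, smul_smul, smul_smul]
    ring_nf
  simp_rw [hexp]
  rw [← Finset.sum_const_zero (s := Finset.range k)]
  refine tendsto_finsetSum _ fun j _ => ?_
  simpa using (Complex.tendsto_pow_mul_exp_mul_atTop_nhds_zero hμ j).smul_const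
    ((j.factorial⁻¹ : ℂ) • (N ^ j *ᵥ v))

theorem tendsto_exp_smul_mulVec_of_spectrum_re_neg {A : Matrix n n ℂ}
    (h : ∀ μ ∈ spectrum ℂ A, μ.re < 0) (v : n → ℂ) :
    Tendsto (fun t : ℝ => NormedSpace.exp (t • A) *ᵥ v) atTop (𝓝 0) := by
  have hv : v ∈ ⨆ μ, Module.End.maxGenEigenspace (toLinAlgEquiv' A) μ := by
    rw [Module.End.iSup_maxGenEigenspace_eq_top]
    exact Submodule.mem_top
  induction hv using Submodule.iSup_induction' with
  | mem μ w hw =>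
    rcases eq_or_ne w 0 with rfl | hw0
    · simp
    obtain ⟨k, hk⟩ := (Module.End.mem_maxGenEigenspace _ _ _).mp hw
    have hμ : μ ∈ spectrum ℂ A := by
      rw [← AlgEquiv.spectrum_eq toLinAlgEquiv' A]
      exact Module.End.mem_spectrum_of_mem_maxGenEigenspace hw hw0
    refine tendsto_exp_smul_mulVec_of_pow_sub_smul_one_mulVec_eq_zero (h μ hμ) (k := k) ?_
    rwa [← toLinAlgEquiv'_apply, map_pow, map_sub, map_smul, map_one]
  | zero => simp
  | add w₁ w₂ _ _ h₁ h₂ => simpa [mulVec_add] using h₁.add h₂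

theorem tendsto_of_forall_tendsto_mulVec {m R ι : Type*} [NonAssocSemiring R] [TopologicalSpace R]
    {l : Filter ι} {M : ι → Matrix m n R} {M₀ : Matrix m n R}
    (h : ∀ v, Tendsto (fun i => M i *ᵥ v) l (𝓝 (M₀ *ᵥ v))) : Tendsto M l (𝓝 M₀) := by
  refine tendsto_pi_nhds.mpr fun i => tendsto_pi_nhds.mpr fun j => ?_
  simpa [mulVec_single_one] using tendsto_pi_nhds.mp (h (Pi.single j 1)) i

end Matrix

theorem exp_smul_tendsto_zero_of_spectrum_re_neg
    {n : Type*} [Fintype n] [DecidableEq n] (A : Matrix n n ℂ)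
    (h : ∀ μ ∈ spectrum ℂ A, μ.re < 0) :
    Tendsto (fun t : ℝ => NormedSpace.exp (t • A)) atTop (𝓝 0) :=
  Matrix.tendsto_of_forall_tendsto_mulVec fun v => by
    simpa using Matrix.tendsto_exp_smul_mulVec_of_spectrum_re_neg h v
end

section
/- Let n be a nonempty finite type and let α : ℝ≥0 → Matrix n n ℝ be a Markov semigroup: α is continuous, α 0 = 1, α (s + t) = α s * α t for all s, t, and α t is stochastic for every t. Then there exists a matrix P : Matrix n n ℝ such that α t tends to P as t → ∞ (Tendsto α atTop (𝓝 P)), and moreover P * P = P. -/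
open Filter Topology
open scoped NNReal

open Finset

/-!
A stochastic matrix `A` whose diagonal entries are at least `1/2` is `(1 + B)/2` with `B`
stochastic, and the binomial expansion of `(1 + B)^k (1 - B)` bounds `‖A^k - A^(k+1)‖` by a
multiple of `C(k, ⌊k/2⌋) / 2^k = O(k^(-1/2))`. As the powers of `A` are bounded, any cluster point
`L` of them satisfies `A L = L`, and then `A^k - L = A^(k-N) (A^N - L)` forces `A^k → L`.

By continuity, `α t` has this form for all small `t`. Let `P` be the limit of the powers of
`α h` for such an `h`. Since `α h = α (h/(m+1))^(m+1)`, `P` is also the limit of the powers of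
`α (h/(m+1))`, hence is fixed by it; the set of `t` with `α t P = P` is closed and additive, so it is everything.
Writing `t = q h + r` gives `α t - P = α r (α h ^ q - P) → 0`, and `P² = P` follows.
-/

theorem Nat.centralBinom_sq_mul_le (m : ℕ) : m.centralBinom ^ 2 * (2 * m + 1) ≤ 16 ^ m := by
  induction m with
  | zero => simp
  | succ m ih =>
    have key : (m + 1).centralBinom ^ 2 * (2 * (m + 1) + 1) * (m + 1) ^ 2 ≤
        16 ^ (m + 1) * (m + 1) ^ 2 :=
      calc _ = ((m + 1) * (m + 1).centralBinom) ^ 2 * (2 * m + 3) := by ring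
        _ = 4 * ((2 * m + 1) * (2 * m + 3)) * (m.centralBinom ^ 2 * (2 * m + 1)) := by
          rw [Nat.succ_mul_centralBinom_succ]; ring
        _ ≤ 4 * (2 * m + 2) ^ 2 * 16 ^ m := by gcongr; nlinarith
        _ = _ := by ring
    exact Nat.le_of_mul_le_mul_right key (by positivity)

theorem Nat.choose_half_sq_mul_le (k : ℕ) : k.choose (k / 2) ^ 2 * (k + 1) ≤ 4 ^ k := by
  obtain ⟨m, rfl | rfl⟩ := k.even_or_odd'
  · rw [show 2 * m / 2 = m by omega, ← centralBinom_eq_two_mul_choose, pow_mul]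
    exact centralBinom_sq_mul_le m
  · have hpascal : (m + 1).centralBinom = 2 * (2 * m + 1).choose m := by
      rw [centralBinom_eq_two_mul_choose, show 2 * (m + 1) = 2 * m + 1 + 1 by ring,
        choose_succ_succ, choose_symm_half]
      ring
    have h := centralBinom_sq_mul_le (m + 1)
    rw [hpascal] at h
    rw [show (2 * m + 1) / 2 = m by omega]
    refine Nat.le_of_mul_le_mul_left ?_ (show 0 < 4 by norm_num)
    calc _ = (2 * (2 * m + 1).choose m) ^ 2 * (2 * m + 2) := by ring
      _ ≤ (2 * (2 * m + 1).choose m) ^ 2 * (2 * (m + 1) + 1) :=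
          Nat.mul_le_mul_left _ (by omega)
      _ ≤ 16 ^ (m + 1) := h
      _ = 4 * 4 ^ (2 * m + 1) := by rw [pow_succ, pow_succ, pow_mul]; norm_num; ring

theorem tendsto_choose_half_div_two_pow :
    Tendsto (fun k : ℕ => (k.choose (k / 2) : ℝ) / 2 ^ k) atTop (𝓝 0) := by
  have hsq : Tendsto (fun k : ℕ => ((k.choose (k / 2) : ℝ) / 2 ^ k) ^ 2) atTop (𝓝 0) := by
    refine squeeze_zero (fun k => by positivity) (fun k => ?_)
      tendsto_one_div_add_atTop_nhds_zero_nat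
    have h : ((k.choose (k / 2)) ^ 2 * (k + 1) : ℝ) ≤ 4 ^ k := by
      exact_mod_cast k.choose_half_sq_mul_le
    rw [div_pow, ← pow_mul, mul_comm, pow_mul, div_le_div_iff₀ (by positivity) (by positivity)]
    norm_num
    linarith
  have h := hsq.sqrt
  rw [Real.sqrt_zero] at h
  exact h.congr fun k => Real.sqrt_sq (by positivity)

theorem sum_range_abs_sub_of_unimodal {f : ℕ → ℝ} {M N : ℕ} (hMN : M ≤ N)
    (hmono : ∀ m < M, f m ≤ f (m + 1)) (hanti : ∀ m, M ≤ m → f (m + 1) ≤ f m) :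
    ∑ m ∈ range N, |f (m + 1) - f m| = 2 * f M - f 0 - f N := by
  have hup : ∑ m ∈ range M, |f (m + 1) - f m| = f M - f 0 := by
    rw [← sum_range_sub]
    exact sum_congr rfl fun m hm => abs_of_nonneg (sub_nonneg.2 (hmono m (mem_range.1 hm)))
  have hdown : ∑ m ∈ Ico M N, |f (m + 1) - f m| = f M - f N := by
    rw [← neg_sub, ← sum_Ico_sub f hMN, ← sum_neg_distrib]
    exact sum_congr rfl fun m hm => abs_of_nonpos (sub_nonpos.2 (hanti m (mem_Ico.1 hm).1))
  rw [← sum_range_add_sum_Ico _ hMN, hup, hdown]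
  ring

theorem Nat.choose_succ_le_of_half_le {k m : ℕ} (h : k / 2 ≤ m) :
    k.choose (m + 1) ≤ k.choose m := by
  refine Nat.le_of_mul_le_mul_right (c := m + 1) ?_ m.succ_pos
  rw [choose_succ_right_eq]
  exact Nat.mul_le_mul_left _ (by omega)

theorem sum_range_abs_choose_succ_sub_choose (k : ℕ) :
    ∑ m ∈ range (k + 1), |(k.choose (m + 1) : ℝ) - k.choose m| = 2 * k.choose (k / 2) - 1 := by
  rw [sum_range_abs_sub_of_unimodal (f := fun m => (k.choose m : ℝ)) (M := k / 2) (N := k + 1)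
    (by omega) (fun m hm => by exact_mod_cast Nat.choose_le_succ_of_lt_half_left hm)
    (fun m hm => by exact_mod_cast Nat.choose_succ_le_of_half_le hm)]
  simp

section Algebra
variable {R : Type*} [Ring R] [Algebra ℝ R]

theorem one_add_pow_eq_sum (b : R) (k : ℕ) :
    (1 + b) ^ k = ∑ m ∈ range (k + 1), (k.choose m : ℝ) • b ^ m := by
  rw [add_comm, (Commute.one_right b).add_pow]
  refine sum_congr rfl fun m _ => ?_
  rw [one_pow, mul_one, ← Nat.cast_comm, ← nsmul_eq_mul, Nat.cast_smul_eq_nsmul]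

theorem one_add_pow_mul_one_sub (b : R) (k : ℕ) :
    (1 + b) ^ k * (1 - b) =
      1 + ∑ m ∈ range (k + 1), ((k.choose (m + 1) : ℝ) - k.choose m) • b ^ (m + 1) := by
  have hshift : ∑ m ∈ range (k + 1), (k.choose (m + 1) : ℝ) • b ^ (m + 1) =
      ∑ m ∈ range (k + 1), (k.choose m : ℝ) • b ^ m - 1 := by
    have h := sum_range_succ' (fun m => (k.choose m : ℝ) • b ^ m) (k + 1)
    rw [sum_range_succ, Nat.choose_succ_self] at h
    rw [eq_sub_iff_add_eq]
    simpa using h.symm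
  simp only [one_add_pow_eq_sum, sum_mul, mul_sub, mul_one, smul_mul_assoc, ← pow_succ, sub_smul,
    sum_sub_distrib, hshift]
  abel

end Algebra

theorem pow_mul_eq_self {R : Type*} [Monoid R] {a x : R} (h : a * x = x) (k : ℕ) :
    a ^ k * x = x := by
  simpa using Function.iterate_fixed h k

section NormedRing
variable {R : Type*} [NormedRing R]

theorem exists_tendsto_pow_of_tendsto_pow_sub_pow_succ [ProperSpace R] {a : R} {C : ℝ}
    (hC : ∀ k, ‖a ^ k‖ ≤ C) (hdiff : Tendsto (fun k => a ^ k - a ^ (k + 1)) atTop (𝓝 0)) :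
    ∃ L, Tendsto (a ^ ·) atTop (𝓝 L) ∧ a * L = L := by
  obtain ⟨L, -, φ, hφ, hL⟩ := tendsto_subseq_of_bounded (Metric.isBounded_closedBall (x := 0))
    fun k => mem_closedBall_zero_iff.2 (hC k)
  have hfix : a * L = L := by
    have h₁ : Tendsto (fun j => a * a ^ φ j) atTop (𝓝 (a * L)) := hL.const_mul a
    have h₂ := hL.sub (hdiff.comp hφ.tendsto_atTop)
    simp only [Function.comp_def, sub_sub_cancel, sub_zero, ← pow_succ'] at h₁ h₂
    exact tendsto_nhds_unique h₁ h₂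
  refine ⟨L, Metric.tendsto_atTop.2 fun ε hε => ?_, hfix⟩
  have hsmall : ∀ᶠ j in atTop, C * ‖a ^ φ j - L‖ < ε := by
    have h := (tendsto_iff_norm_sub_tendsto_zero.1 hL).const_mul C
    rw [mul_zero] at h
    exact h.eventually (gt_mem_nhds hε)
  obtain ⟨j, hj⟩ := hsmall.exists
  refine ⟨φ j, fun k hk => ?_⟩
  calc dist (a ^ k) L = ‖a ^ (k - φ j) * (a ^ φ j - L)‖ := by
        rw [dist_eq_norm, mul_sub, ← pow_add, Nat.sub_add_cancel hk, pow_mul_eq_self hfix]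
    _ ≤ C * ‖a ^ φ j - L‖ :=
        (norm_mul_le _ _).trans (mul_le_mul_of_nonneg_right (hC _) (norm_nonneg _))
    _ < ε := hj

variable [NormedAlgebra ℝ R]

theorem norm_half_one_add_pow_le {b : R} {C : ℝ} (hb : ∀ m, ‖b ^ m‖ ≤ C) (k : ℕ) :
    ‖((2⁻¹ : ℝ) • (1 + b)) ^ k‖ ≤ C := by
  calc ‖((2⁻¹ : ℝ) • (1 + b)) ^ k‖
      = (2⁻¹ : ℝ) ^ k * ‖∑ m ∈ range (k + 1), (k.choose m : ℝ) • b ^ m‖ := by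
        rw [smul_pow, norm_smul, one_add_pow_eq_sum, norm_pow, Real.norm_of_nonneg (by norm_num)]
    _ ≤ (2⁻¹ : ℝ) ^ k * ∑ m ∈ range (k + 1), (k.choose m : ℝ) * C := by
        gcongr
        refine (norm_sum_le _ _).trans (sum_le_sum fun m _ => ?_)
        rw [norm_smul, Real.norm_natCast]
        exact mul_le_mul_of_nonneg_left (hb m) (Nat.cast_nonneg _)
    _ = C := by
        rw [← sum_mul, ← Nat.cast_sum, Nat.sum_range_choose, Nat.cast_pow, ← mul_assoc, ← mul_pow]
        norm_num

theorem norm_half_one_add_pow_sub_pow_succ_le {b : R} {C : ℝ} (hb : ∀ m, ‖b ^ m‖ ≤ C) (k : ℕ) :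
    ‖((2⁻¹ : ℝ) • (1 + b)) ^ k - ((2⁻¹ : ℝ) • (1 + b)) ^ (k + 1)‖ ≤
      C * (k.choose (k / 2) / 2 ^ k) := by
  set D : ℕ → ℝ := fun m => (k.choose (m + 1) : ℝ) - k.choose m
  have hsum :
      ‖(1 : R) + ∑ m ∈ range (k + 1), D m • b ^ (m + 1)‖ ≤ C * (2 * k.choose (k / 2)) := by
    calc _ ≤ C + ∑ m ∈ range (k + 1), |D m| * C := by
          refine (norm_add_le _ _).trans (add_le_add (by simpa using hb 0) ?_)
          refine (norm_sum_le _ _).trans (sum_le_sum fun m _ => ?_)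
          rw [norm_smul, Real.norm_eq_abs]
          exact mul_le_mul_of_nonneg_left (hb _) (abs_nonneg _)
      _ = _ := by rw [← sum_mul, sum_range_abs_choose_succ_sub_choose]; ring
  calc _ = ‖(2⁻¹ : ℝ) ^ (k + 1) • ((1 + b) ^ k * (1 - b))‖ := by
        have h : 1 - (2⁻¹ : ℝ) • (1 + b) = (2⁻¹ : ℝ) • (1 - b) := by module
        rw [pow_succ, ← mul_one_sub, h, smul_pow, smul_mul_smul_comm, pow_succ]
    _ ≤ (2⁻¹ : ℝ) ^ (k + 1) * (C * (2 * k.choose (k / 2))) := by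
        rw [norm_smul, Real.norm_of_nonneg (by norm_num), one_add_pow_mul_one_sub]
        gcongr
    _ = _ := by rw [pow_succ, inv_pow]; field_simp

theorem exists_tendsto_half_one_add_pow [ProperSpace R] {b : R} {C : ℝ}
    (hb : ∀ m, ‖b ^ m‖ ≤ C) :
    ∃ L, Tendsto (((2⁻¹ : ℝ) • (1 + b)) ^ ·) atTop (𝓝 L) ∧ (2⁻¹ : ℝ) • (1 + b) * L = L := by
  refine exists_tendsto_pow_of_tendsto_pow_sub_pow_succ (norm_half_one_add_pow_le hb) ?_
  rw [tendsto_zero_iff_norm_tendsto_zero]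
  refine squeeze_zero (fun _ => norm_nonneg _) (norm_half_one_add_pow_sub_pow_succ_le hb) ?_
  simpa using tendsto_choose_half_div_two_pow.const_mul C

end NormedRing

theorem Filter.Tendsto.pow_pow {M : Type*} [Monoid M] [TopologicalSpace M] {a L : M}
    (h : Tendsto (a ^ ·) atTop (𝓝 L)) {N : ℕ} (hN : 0 < N) :
    Tendsto ((a ^ N) ^ ·) atTop (𝓝 L) := by
  simpa [Function.comp_def, ← pow_mul] using
    h.comp (tendsto_id.const_mul_atTop' hN)

namespace NNReal

theorem nat_floor_div_nsmul_le (t h : ℝ≥0) : ⌊t / h⌋₊ • h ≤ t := by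
  rcases eq_or_ne h 0 with rfl | hh
  · simp
  rw [nsmul_eq_mul, ← le_div_iff₀ (pos_iff_ne_zero.2 hh)]
  exact Nat.floor_le (by positivity)

theorem lt_nat_floor_div_nsmul_add (t : ℝ≥0) {h : ℝ≥0} (hh : 0 < h) : t < ⌊t / h⌋₊ • h + h := by
  rw [nsmul_eq_mul, ← add_one_mul, ← div_lt_iff₀ hh]
  exact Nat.lt_floor_add_one _

theorem tendsto_nat_floor_div_nsmul {ι : Type*} {l : Filter ι} {ε : ι → ℝ≥0}
    (hpos : ∀ i, 0 < ε i) (hε : Tendsto ε l (𝓝 0)) (t : ℝ≥0) :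
    Tendsto (fun i => ⌊t / ε i⌋₊ • ε i) l (𝓝 t) := by
  refine tendsto_of_tendsto_of_tendsto_of_le_of_le (g := fun i => t - ε i)
    (by simpa using tendsto_const_nhds.sub hε) tendsto_const_nhds (fun i => ?_)
    (fun i => nat_floor_div_nsmul_le t (ε i))
  exact tsub_le_iff_right.2 (lt_nat_floor_div_nsmul_add t (hpos i)).le

end NNReal

namespace AddChar

section Monoid
variable {R : Type*} [Monoid R] (ψ : AddChar ℝ≥0 R)

theorem mul_eq_self_of_tendsto [TopologicalSpace R] [ContinuousMul R] [T2Space R]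
    (hψ : Continuous ψ) {ι : Type*} {l : Filter ι} [l.NeBot] {ε : ι → ℝ≥0} (hpos : ∀ i, 0 < ε i)
    (hε : Tendsto ε l (𝓝 0)) {x : R} (hfix : ∀ i, ψ (ε i) * x = x) (t : ℝ≥0) : ψ t * x = x := by
  have hclosed : IsClosed {s | ψ s * x = x} :=
    isClosed_eq (hψ.mul continuous_const) continuous_const
  refine hclosed.mem_of_tendsto (NNReal.tendsto_nat_floor_div_nsmul hpos hε t)
    (Eventually.of_forall fun i => ?_)
  show ψ _ * x = x
  rw [map_nsmul_eq_pow, pow_mul_eq_self (hfix i)]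

end Monoid

section NormedRing
variable {R : Type*} [NormedRing R] (ψ : AddChar ℝ≥0 R)

theorem tendsto_atTop_of_tendsto_pow {C : ℝ} (hbdd : ∀ t, ‖ψ t‖ ≤ C) {h : ℝ≥0} (hh : 0 < h)
    {P : R} (hP : Tendsto (ψ h ^ ·) atTop (𝓝 P)) (hfix : ∀ t, ψ t * P = P) :
    Tendsto ψ atTop (𝓝 P) := by
  set q : ℝ≥0 → ℕ := fun t => ⌊t / h⌋₊
  have hq : Tendsto q atTop atTop := tendsto_nat_floor_atTop.comp (tendsto_id.atTop_div_const hh)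
  have hdecomp : ∀ t, ψ t - P = ψ (t - q t • h) * (ψ h ^ q t - P) := fun t => by
    rw [mul_sub, hfix, ← map_nsmul_eq_pow, ← map_add_eq_mul,
      tsub_add_cancel_of_le (NNReal.nat_floor_div_nsmul_le t h)]
  have hlim := (tendsto_iff_norm_sub_tendsto_zero.1 (hP.comp hq)).const_mul C
  rw [mul_zero] at hlim
  refine tendsto_iff_norm_sub_tendsto_zero.2
    (squeeze_zero (fun _ => norm_nonneg _) (fun t => ?_) hlim)
  rw [hdecomp]
  exact (norm_mul_le _ _).trans (mul_le_mul_of_nonneg_right (hbdd _) (norm_nonneg _))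

theorem exists_tendsto_atTop_idempotent (hψ : Continuous ψ) {C : ℝ} (hbdd : ∀ t, ‖ψ t‖ ≤ C)
    (hpow : ∀ᶠ t in 𝓝 0, ∃ L, Tendsto (ψ t ^ ·) atTop (𝓝 L) ∧ ψ t * L = L) :
    ∃ P, Tendsto ψ atTop (𝓝 P) ∧ P * P = P := by
  obtain ⟨a, ha, hpow⟩ := NNReal.nhds_zero_basis.eventually_iff.1 hpow
  set ε : ℕ → ℝ≥0 := fun m => a / 2 / (m + 1)
  have hpos : ∀ m, 0 < ε m := fun m => by positivity
  have hlt : ∀ m, ε m < a := fun m =>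
    (div_le_self (by positivity) (by simp)).trans_lt (half_lt_self ha)
  obtain ⟨P, hP, -⟩ := hpow (hlt 0)
  have hfix : ∀ m, ψ (ε m) * P = P := fun m => by
    obtain ⟨L, hL, hLfix⟩ := hpow (hlt m)
    have hε : (m + 1) • ε m = ε 0 := by
      simp only [ε, nsmul_eq_mul, Nat.cast_add, Nat.cast_one, CharP.cast_eq_zero, zero_add, div_one]
      field_simp
    have hLP : L = P := by
      refine tendsto_nhds_unique (hL.pow_pow m.succ_pos) ?_
      rwa [← map_nsmul_eq_pow, hε]
    rwa [← hLP]
  have hε : Tendsto ε atTop (𝓝 0) := by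
    simpa [ε] using (tendsto_add_atTop_iff_nat 1).2 (tendsto_const_div_atTop_nhds_zero_nat (a / 2))
  have hfix_all := ψ.mul_eq_self_of_tendsto hψ hpos hε hfix
  have hlim := ψ.tendsto_atTop_of_tendsto_pow hbdd (hpos 0) hP hfix_all
  refine ⟨P, hlim, tendsto_nhds_unique (hlim.mul_const P) ?_⟩
  simp only [hfix_all, tendsto_const_nhds]

end NormedRing
end AddChar

section Stochastic
variable {n : Type*} [Fintype n] [DecidableEq n]
open Matrix

theorem isStochastic_iff_mem_colStochastic {A : Matrix n n ℝ} :
    IsStochastic A ↔ A ∈ colStochastic ℝ n :=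
  mem_colStochastic_iff_sum.symm

theorem two_smul_sub_one_mem_colStochastic {A : Matrix n n ℝ} (hA : A ∈ colStochastic ℝ n)
    (hdiag : ∀ i, 2⁻¹ ≤ A i i) : (2 : ℝ) • A - 1 ∈ colStochastic ℝ n := by
  rw [mem_colStochastic_iff_sum] at hA ⊢
  refine ⟨fun i j => ?_, fun j => ?_⟩
  · rcases eq_or_ne i j with rfl | hij
    · simp only [Matrix.sub_apply, Matrix.smul_apply, one_apply_eq, smul_eq_mul]
      linarith [hdiag i]
    · simpa [one_apply_ne hij] using hA.1 i j
  · simp only [Matrix.sub_apply, Matrix.smul_apply, smul_eq_mul, one_apply, sum_sub_distrib,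
      ← mul_sum, hA.2 j, mul_one, sum_ite_eq', mem_univ, ↓reduceIte]
    norm_num

attribute [local instance] Matrix.linftyOpNormedRing Matrix.linftyOpNormedAlgebra

theorem norm_le_card_of_mem_colStochastic {A : Matrix n n ℝ} (hA : A ∈ colStochastic ℝ n) :
    ‖A‖ ≤ Fintype.card n := by
  have hrow : ∀ i, ∑ j, ‖A i j‖₊ ≤ Fintype.card n := fun i => by
    simpa using sum_le_card_nsmul univ (fun j => ‖A i j‖₊) 1 fun j _ => by
      rw [← NNReal.coe_le_coe, coe_nnnorm, Real.norm_of_nonneg (nonneg_of_mem_colStochastic hA)]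
      exact le_one_of_mem_colStochastic hA
  rw [linfty_opNorm_def]
  exact_mod_cast Finset.sup_le fun i _ => hrow i

theorem exists_tendsto_pow_of_mem_colStochastic {A : Matrix n n ℝ} (hA : A ∈ colStochastic ℝ n)
    (hdiag : ∀ i, 2⁻¹ ≤ A i i) : ∃ L, Tendsto (A ^ ·) atTop (𝓝 L) ∧ A * L = L := by
  have hA' : A = (2⁻¹ : ℝ) • (1 + ((2 : ℝ) • A - 1)) := by module
  rw [hA']
  exact exists_tendsto_half_one_add_pow fun m =>
    norm_le_card_of_mem_colStochastic (pow_mem (two_smul_sub_one_mem_colStochastic hA hdiag) m)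

theorem AddChar.exists_tendsto_atTop_idempotent_of_mem_colStochastic
    (ψ : AddChar ℝ≥0 (Matrix n n ℝ)) (hψ : Continuous ψ) (hstoch : ∀ t, ψ t ∈ colStochastic ℝ n) :
    ∃ P, Tendsto ψ atTop (𝓝 P) ∧ P * P = P := by
  refine ψ.exists_tendsto_atTop_idempotent hψ
    (fun t => norm_le_card_of_mem_colStochastic (hstoch t)) ?_
  have hdiag : ∀ᶠ t in 𝓝 0, ∀ i, 2⁻¹ ≤ ψ t i i := eventually_all.2 fun i => by
    have := (hψ.matrix_elem i i).tendsto 0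
    rw [map_zero_eq_one, one_apply_eq] at this
    exact this.eventually (le_mem_nhds (by norm_num))
  exact hdiag.mono fun t ht => exists_tendsto_pow_of_mem_colStochastic (hstoch t) ht

end Stochastic

theorem markov_semigroup_tendsto_idempotent_general
    {n : Type*} [Fintype n] [DecidableEq n]
    (α : ℝ≥0 → Matrix n n ℝ)
    (hcont : Continuous α) (h0 : α 0 = 1)
    (hadd : ∀ s t : ℝ≥0, α (s + t) = α s * α t)
    (hstoch : ∀ t : ℝ≥0, IsStochastic (α t)) :
    ∃ P : Matrix n n ℝ, Tendsto α atTop (𝓝 P) ∧ P * P = P :=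
  AddChar.exists_tendsto_atTop_idempotent_of_mem_colStochastic ⟨α, h0, hadd⟩ hcont
    fun t => isStochastic_iff_mem_colStochastic.1 (hstoch t)

theorem markov_semigroup_tendsto_idempotent
    {n : Type*} [Fintype n] [DecidableEq n] [Nonempty n]
    (α : ℝ≥0 → Matrix n n ℝ)
    (hcont : Continuous α) (h0 : α 0 = 1)
    (hadd : ∀ s t : ℝ≥0, α (s + t) = α s * α t)
    (hstoch : ∀ t : ℝ≥0, IsStochastic (α t)) :
    ∃ P : Matrix n n ℝ, Tendsto α atTop (𝓝 P) ∧ P * P = P :=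
  markov_semigroup_tendsto_idempotent_general α hcont h0 hadd hstoch
end

section
/- Let n be a nonempty finite type and α : ℝ≥0 → Matrix n n ℝ a Markov semigroup. Then there exists a unique continuous function β : ℝ≥0∞ → Matrix n n ℝ such that β (↑t) = α t for every t : ℝ≥0; moreover this β satisfies β (x + y) = β x * β y for all x, y : ℝ≥0∞ and β 0 = 1 (so β is a continuous monoid homomorphism from ([0,∞], +) to matrices under multiplication extending α). -/
/-!
For `c > 0` the matrix `α c = α (c / m) ^ m` is stochastic with positive diagonal, since
`α (c / m)` is close to `1` for large `m`. By Gershgorin's theorem every eigenvalue of such a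
matrix is `1` or lies in the open unit disc, and since its transpose is a contraction for the sup
norm, the eigenvalue `1` carries no nontrivial Jordan block; hence its powers converge.

Let `L = lim α k`. The limit of `α (1 / m) ^ k` is also the limit of its subsequence `α k`, so
`α (a / m) * L = L`, and by continuity `α c * L = L` for every `c`. Then
`α t - L = α (t - ⌊t⌋) * (α ⌊t⌋ - L) → 0`, the first factor staying in a compact set.
Sending `∞` to `L` extends `α` continuously; uniqueness and multiplicativity of the extension
follow from the density of `ℝ≥0` in `[0, ∞]` and the continuity of addition there.
-/

open Filter Topology
open scoped NNReal ENNReal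

open scoped Matrix

theorem tendsto_choose_mul_pow_sub_atTop {R : Type*} [NormedRing R] [HasSummableGeomSeries R]
    {μ : R} (hμ : ‖μ‖ < 1) (j : ℕ) :
    Tendsto (fun k ↦ (k.choose j : R) * μ ^ (k - j)) atTop (𝓝 0) := by
  rw [← tendsto_add_atTop_iff_nat j]
  simpa using (summable_choose_mul_geometric_of_norm_lt_one j hμ).tendsto_atTop_zero

namespace Module.End

theorem pow_apply_eq_sum_of_pow_sub_smul_apply_eq_zero {R M : Type*} [CommRing R]
    [AddCommGroup M] [Module R M] (f : End R M) (μ : R) {v : M} {m : ℕ}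
    (hv : ((f - μ • 1) ^ m) v = 0) {k : ℕ} (hk : m ≤ k) :
    (f ^ k) v = ∑ j ∈ Finset.range m, ((k.choose j : R) * μ ^ (k - j)) • ((f - μ • 1) ^ j) v := by
  set N := f - μ • 1
  have hcomm : Commute N (μ • 1) := (Commute.one_right _).smul_right μ
  have hterm : ∀ j, (N ^ j * (μ • 1) ^ (k - j) * (k.choose j : End R M)) v
      = ((k.choose j : R) * μ ^ (k - j)) • (N ^ j) v := fun j ↦ by
    simp only [smul_pow, one_pow, mul_apply, natCast_apply, LinearMap.smul_apply, one_apply,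
      map_smul, mul_smul, ← Nat.cast_smul_eq_nsmul R]
  rw [← sub_add_cancel f (μ • 1), hcomm.add_pow, LinearMap.sum_apply]
  simp only [hterm]
  refine (Finset.sum_subset (Finset.range_subset_range.2 (by omega)) fun j _ hj ↦ ?_).symm
  rw [Finset.mem_range, not_lt] at hj
  rw [← Nat.sub_add_cancel hj, pow_add, mul_apply, hv, map_zero, smul_zero]

theorem pow_apply_eq_add_nsmul_of_sq_sub_one_apply_eq_zero {R M : Type*} [Semiring R]
    [AddCommGroup M] [Module R M] {f : End R M} {w : M} (hw : ((f - 1) ^ 2 : End R M) w = 0)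
    (k : ℕ) : (f ^ k) w = w + k • (f - 1) w := by
  have hfix : f ((f - 1) w) = (f - 1) w := by
    rwa [pow_two, mul_apply, LinearMap.sub_apply, one_apply, sub_eq_zero] at hw
  induction k with
  | zero => simp
  | succ k ih =>
    rw [pow_succ', mul_apply, ih, map_add, map_nsmul, hfix, succ_nsmul, LinearMap.sub_apply,
      one_apply]
    abel

variable {𝕜 V : Type*} [RCLike 𝕜] [NormedAddCommGroup V] [NormedSpace 𝕜 V] {f : End 𝕜 V}

theorem tendsto_pow_apply_of_mem_maxGenEigenspace {μ : 𝕜} (hμ : ‖μ‖ < 1) {v : V}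
    (hv : v ∈ f.maxGenEigenspace μ) : Tendsto (fun k ↦ (f ^ k) v) atTop (𝓝 0) := by
  obtain ⟨m, hm⟩ := (mem_maxGenEigenspace f μ v).1 hv
  have hlim : Tendsto (fun k ↦ ∑ j ∈ Finset.range m,
      ((k.choose j : 𝕜) * μ ^ (k - j)) • ((f - μ • 1) ^ j) v) atTop (𝓝 0) := by
    simpa using tendsto_finsetSum (Finset.range m)
      fun j _ ↦ (tendsto_choose_mul_pow_sub_atTop hμ j).smul_const (((f - μ • 1) ^ j) v)
  refine hlim.congr' ?_
  filter_upwards [eventually_ge_atTop m] with k hk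
  exact (pow_apply_eq_sum_of_pow_sub_smul_apply_eq_zero f μ hm hk).symm

theorem norm_pow_apply_le (hf : ∀ v, ‖f v‖ ≤ ‖v‖) (v : V) (k : ℕ) : ‖(f ^ k) v‖ ≤ ‖v‖ := by
  induction k with
  | zero => simp
  | succ k ih => rw [pow_succ', mul_apply]; exact (hf _).trans ih

theorem apply_eq_self_of_sq_sub_one_apply_eq_zero (hf : ∀ v, ‖f v‖ ≤ ‖v‖) {w : V}
    (hw : ((f - 1) ^ 2 : End 𝕜 V) w = 0) : f w = w := by
  have hbound : ∀ k : ℕ, k * ‖(f - 1) w‖ ≤ 2 * ‖w‖ := fun k ↦ calc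
    k * ‖(f - 1) w‖ = ‖(f ^ k) w - w‖ := by
      rw [pow_apply_eq_add_nsmul_of_sq_sub_one_apply_eq_zero hw, add_sub_cancel_left,
        RCLike.norm_nsmul 𝕜, nsmul_eq_mul]
    _ ≤ ‖(f ^ k) w‖ + ‖w‖ := norm_sub_le _ _
    _ ≤ 2 * ‖w‖ := by linarith [norm_pow_apply_le hf w k]
  have hzero : ‖(f - 1) w‖ = 0 := by
    by_contra hne
    have hpos : 0 < ‖(f - 1) w‖ := lt_of_le_of_ne (norm_nonneg _) (Ne.symm hne)
    obtain ⟨k, hk⟩ := exists_nat_gt (2 * ‖w‖ / ‖(f - 1) w‖)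
    rw [div_lt_iff₀ hpos] at hk
    linarith [hbound k]
  rwa [norm_eq_zero, LinearMap.sub_apply, one_apply, sub_eq_zero] at hzero

theorem apply_eq_self_of_pow_sub_one_apply_eq_zero (hf : ∀ v, ‖f v‖ ≤ ‖v‖) {m : ℕ} {v : V}
    (hv : ((f - 1) ^ m : End 𝕜 V) v = 0) : f v = v := by
  induction m generalizing v with
  | zero => simp_all
  | succ m ih =>
    have hfix := ih (v := (f - 1) v) (by rwa [← mul_apply, ← pow_succ])
    refine apply_eq_self_of_sq_sub_one_apply_eq_zero hf ?_
    rw [pow_two, mul_apply, LinearMap.sub_apply _ _ ((f - 1) v), hfix, one_apply, sub_self]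

theorem exists_tendsto_pow_apply [IsAlgClosed 𝕜] [FiniteDimensional 𝕜 V]
    (hf : ∀ v, ‖f v‖ ≤ ‖v‖) (hspec : ∀ μ, f.HasEigenvalue μ → μ = 1 ∨ ‖μ‖ < 1) (v : V) :
    ∃ u, Tendsto (fun k ↦ (f ^ k) v) atTop (𝓝 u) := by
  have hv : v ∈ ⨆ μ, f.maxGenEigenspace μ := by
    rw [iSup_maxGenEigenspace_eq_top]; trivial
  refine Submodule.iSup_induction (motive := fun x ↦ ∃ u, Tendsto (fun k ↦ (f ^ k) x) atTop (𝓝 u))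
    _ hv (fun μ x hx ↦ ?_) ⟨0, by simp⟩ fun x y ⟨u, hu⟩ ⟨u', hu'⟩ ↦
    ⟨u + u', by simpa using hu.add hu'⟩
  rcases eq_or_ne x 0 with rfl | hx0
  · exact ⟨0, by simp⟩
  have hμ : f.HasEigenvalue μ :=
    HasUnifEigenvalue.lt zero_lt_one ((Submodule.ne_bot_iff _).2 ⟨x, hx, hx0⟩)
  rcases hspec μ hμ with rfl | hμ1
  · obtain ⟨m, hm⟩ := (mem_maxGenEigenspace f 1 x).1 hx
    rw [one_smul] at hm
    have hfix : ∀ k, (f ^ k) x = x := fun k ↦ by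
      rw [coe_pow]
      exact Function.IsFixedPt.iterate (apply_eq_self_of_pow_sub_one_apply_eq_zero hf hm) k
    exact ⟨x, by simp [hfix]⟩
  · exact ⟨0, tendsto_pow_apply_of_mem_maxGenEigenspace hμ1 hx⟩

end Module.End

theorem Complex.eq_one_or_norm_lt_one_of_norm_sub_le {μ : ℂ} {p : ℝ} (hp : 0 < p)
    (hμ : ‖μ - p‖ ≤ 1 - p) : μ = 1 ∨ ‖μ‖ < 1 := by
  have hsq : (μ.re - p) ^ 2 + μ.im ^ 2 ≤ (1 - p) ^ 2 := by
    have := pow_le_pow_left₀ (norm_nonneg _) hμ 2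
    rwa [Complex.sq_norm, Complex.normSq_apply, Complex.sub_re, Complex.sub_im,
      Complex.ofReal_re, Complex.ofReal_im, sub_zero, ← pow_two, ← pow_two] at this
  rcases lt_or_ge ‖μ‖ 1 with h | h
  · exact Or.inr h
  have hnorm : 1 ≤ μ.re ^ 2 + μ.im ^ 2 := by
    have := pow_le_pow_left₀ zero_le_one h 2
    rwa [one_pow, Complex.sq_norm, Complex.normSq_apply, ← pow_two, ← pow_two] at this
  have hp1 : p ≤ 1 := by linarith [norm_nonneg (μ - p)]
  have hre : μ.re = 1 := by nlinarith
  have him : μ.im = 0 := by nlinarith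
  exact Or.inl (Complex.ext hre him)

namespace IsStochastic

variable {n : Type*} [Fintype n] {A B : Matrix n n ℝ}

theorem mul (hA : IsStochastic A) (hB : IsStochastic B) : IsStochastic (A * B) := by
  refine ⟨fun i j ↦ Finset.sum_nonneg fun k _ ↦ mul_nonneg (hA.1 i k) (hB.1 k j), fun j ↦ ?_⟩
  simp only [Matrix.mul_apply]
  rw [Finset.sum_comm]
  simp [← Finset.sum_mul, hA.2, hB.2]

theorem one [DecidableEq n] : IsStochastic (1 : Matrix n n ℝ) :=
  ⟨fun i j ↦ by by_cases h : i = j <;> simp [Matrix.one_apply, h],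
    fun j ↦ by simp [Matrix.one_apply]⟩

theorem pow [DecidableEq n] (hA : IsStochastic A) (k : ℕ) : IsStochastic (A ^ k) := by
  induction k with
  | zero => exact one
  | succ k ih => rw [pow_succ]; exact ih.mul hA

theorem diag_mul_le (hA : IsStochastic A) (hB : IsStochastic B) (i : n) :
    A i i * B i i ≤ (A * B) i i :=
  Finset.single_le_sum (f := fun k ↦ A i k * B k i) (fun k _ ↦ mul_nonneg (hA.1 i k) (hB.1 k i))
    (Finset.mem_univ i)

theorem diag_pow_le [DecidableEq n] (hA : IsStochastic A) (i : n) (k : ℕ) :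
    A i i ^ k ≤ (A ^ k) i i := by
  induction k with
  | zero => simp
  | succ k ih =>
    rw [pow_succ, pow_succ]
    exact (mul_le_mul_of_nonneg_right ih (hA.1 i i)).trans ((hA.pow k).diag_mul_le hA i)

theorem norm_transpose_mulVec_le (hA : IsStochastic A) (w : n → ℂ) :
    ‖(A.map (↑))ᵀ *ᵥ w‖ ≤ ‖w‖ := by
  refine (pi_norm_le_iff_of_nonneg (norm_nonneg w)).2 fun i ↦ ?_
  calc ‖((A.map (↑))ᵀ *ᵥ w) i‖ = ‖∑ j, (A j i : ℂ) * w j‖ := by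
        simp [Matrix.mulVec, dotProduct]
    _ ≤ ∑ j, A j i * ‖w‖ := by
        refine (norm_sum_le _ _).trans (Finset.sum_le_sum fun j _ ↦ ?_)
        rw [norm_mul, Complex.norm_real, Real.norm_of_nonneg (hA.1 j i)]
        exact mul_le_mul_of_nonneg_left (norm_le_pi_norm w j) (hA.1 j i)
    _ = ‖w‖ := by rw [← Finset.sum_mul, hA.2 i, one_mul]

theorem eigenvalue_eq_one_or_norm_lt_one [DecidableEq n] (hA : IsStochastic A)
    (hdiag : ∀ i, 0 < A i i) {μ : ℂ}
    (hμ : Module.End.HasEigenvalue (Matrix.toLin' (A.map (↑) : Matrix n n ℂ)ᵀ) μ) :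
    μ = 1 ∨ ‖μ‖ < 1 := by
  obtain ⟨k, hk⟩ := eigenvalue_mem_ball hμ
  refine Complex.eq_one_or_norm_lt_one_of_norm_sub_le (hdiag k) ?_
  have habs : ∀ j, |A j k| = A j k := fun j ↦ abs_of_nonneg (hA.1 j k)
  simpa [Finset.sum_erase_eq_sub, habs, hA.2 k, dist_eq_norm] using hk

theorem exists_tendsto_pow [DecidableEq n] (hA : IsStochastic A) (hdiag : ∀ i, 0 < A i i) :
    ∃ L, Tendsto (A ^ ·) atTop (𝓝 L) := by
  set f := Matrix.toLin' (A.map ((↑) : ℝ → ℂ))ᵀ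
  have hcol : ∀ k i j, (f ^ k) (Pi.single i 1) j = ((A ^ k) i j : ℂ) := fun k i j ↦ by
    rw [← Matrix.toLin'_pow, Matrix.toLin'_apply, Matrix.mulVec_single_one, ← Matrix.transpose_pow]
    exact (congr_fun₂ (Matrix.map_pow A Complex.ofRealHom k) i j).symm
  choose u hu using fun i ↦ Module.End.exists_tendsto_pow_apply (f := f)
    hA.norm_transpose_mulVec_le (fun μ ↦ hA.eigenvalue_eq_one_or_norm_lt_one hdiag)
    (Pi.single i 1)
  refine ⟨Matrix.of fun i j ↦ (u i j).re, tendsto_pi_nhds.2 fun i ↦ tendsto_pi_nhds.2 fun j ↦ ?_⟩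
  have := (Complex.continuous_re.tendsto _).comp ((continuous_apply j).tendsto _ |>.comp (hu i))
  simpa [Function.comp_def, hcol] using this

end IsStochastic

theorem map_natCast_mul_of_map_add {M : Type*} [Monoid M] {α : ℝ≥0 → M} (h0 : α 0 = 1)
    (hadd : ∀ s t, α (s + t) = α s * α t) (k : ℕ) (c : ℝ≥0) : α (k * c) = α c ^ k := by
  induction k with
  | zero => simpa using h0
  | succ k ih => rw [Nat.cast_succ, add_one_mul, hadd, ih, pow_succ]

theorem pow_mul_eq_of_tendsto_pow {M : Type*} [Monoid M] [TopologicalSpace M] [ContinuousMul M]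
    [T2Space M] {x L : M} (h : Tendsto (x ^ ·) atTop (𝓝 L)) (a : ℕ) : x ^ a * L = L :=
  tendsto_nhds_unique (h.const_mul (x ^ a))
    (by simpa [Function.comp_def, ← pow_add, add_comm] using h.comp (tendsto_add_atTop_nat a))

theorem NNReal.tendsto_floor_mul_div_atTop (c : ℝ≥0) :
    Tendsto (fun m : ℕ ↦ (⌊c * m⌋₊ : ℝ≥0) / m) atTop (𝓝 c) := by
  have hlow : Tendsto (fun m : ℕ ↦ c - 1 / (m : ℝ≥0)) atTop (𝓝 c) := by
    simpa using tendsto_const_nhds.sub (tendsto_one_div_atTop_nhds_zero_nat (𝕜 := ℝ≥0))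
  refine tendsto_of_tendsto_of_tendsto_of_le_of_le' hlow tendsto_const_nhds ?_ ?_ <;>
    filter_upwards [eventually_gt_atTop 0] with m hm
  · rw [tsub_le_iff_right, ← add_div, le_div_iff₀ (Nat.cast_pos.2 hm)]
    exact (Nat.lt_floor_add_one _).le
  · rw [div_le_iff₀ (Nat.cast_pos.2 hm)]
    exact Nat.floor_le (by positivity)

theorem tendsto_atTop_of_tendsto_pow_one {M : Type*} [Ring M] [TopologicalSpace M]
    [IsTopologicalRing M] {α : ℝ≥0 → M} {L : M} (hcont : Continuous α) (h0 : α 0 = 1)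
    (hadd : ∀ s t, α (s + t) = α s * α t) (hL : Tendsto (α 1 ^ ·) atTop (𝓝 L))
    (hinv : ∀ c, α c * L = L) : Tendsto α atTop (𝓝 L) := by
  have hsplit : ∀ t : ℝ≥0, α t - L = α (t - ⌊t⌋₊) * (α ⌊t⌋₊ - L) := fun t ↦ by
    rw [mul_sub, hinv, ← hadd, tsub_add_cancel_of_le (Nat.floor_le (by positivity))]
  have hfloor : Tendsto (fun t : ℝ≥0 ↦ α ⌊t⌋₊ - L) atTop (𝓝 0) := by
    have := (hL.comp (tendsto_nat_floor_atTop (α := ℝ≥0))).sub_const L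
    simpa [Function.comp_def, ← map_natCast_mul_of_map_add h0 hadd] using this
  have hrem : Disjoint (map (fun t : ℝ≥0 ↦ α (t - ⌊t⌋₊)) atTop) (cocompact M) := by
    refine (disjoint_cocompact_right _).2 ⟨α '' Set.Icc 0 1, ?_, isCompact_Icc.image hcont⟩
    refine mem_map.2 (Eventually.of_forall fun t ↦ Set.mem_image_of_mem α ⟨by positivity, ?_⟩)
    exact tsub_le_iff_left.2 (Nat.lt_floor_add_one t).le
  rw [← tendsto_sub_nhds_zero_iff]
  have h := (tendsto_mul_prod_nhds_zero_of_disjoint_cocompact hrem).comp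
    (tendsto_map.prodMk hfloor)
  exact h.congr fun t ↦ (hsplit t).symm

namespace IsStochastic

variable {n : Type*} [Fintype n] [DecidableEq n] {α : ℝ≥0 → Matrix n n ℝ}

theorem semigroup_diag_pos (hcont : Continuous α) (h0 : α 0 = 1)
    (hadd : ∀ s t, α (s + t) = α s * α t) (hstoch : ∀ t, IsStochastic (α t)) (c : ℝ≥0) (i : n) :
    0 < α c i i := by
  have hsmall : Tendsto (fun m : ℕ ↦ α (c / m) i i) atTop (𝓝 1) := by
    have := (hcont.tendsto 0).comp (tendsto_const_div_atTop_nhds_zero_nat c)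
    rw [h0] at this
    simpa using tendsto_pi_nhds.1 (tendsto_pi_nhds.1 this i) i
  obtain ⟨m, hpos, hm⟩ :=
    ((hsmall.eventually (lt_mem_nhds one_pos)).and (eventually_ge_atTop 1)).exists
  calc 0 < α (c / m) i i ^ m := pow_pos hpos m
    _ ≤ (α (c / m) ^ m) i i := (hstoch _).diag_pow_le i m
    _ = α c i i := by
      rw [← map_natCast_mul_of_map_add h0 hadd, mul_div_cancel₀ _ (by positivity)]

theorem semigroup_mul_eq_of_tendsto_pow (hcont : Continuous α) (h0 : α 0 = 1)
    (hadd : ∀ s t, α (s + t) = α s * α t) (hstoch : ∀ t, IsStochastic (α t)) {L : Matrix n n ℝ}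
    (hL : Tendsto (α 1 ^ ·) atTop (𝓝 L)) (c : ℝ≥0) : α c * L = L := by
  have hrat : ∀ a m : ℕ, α (a / m) * L = L := by
    intro a m
    rcases Nat.eq_zero_or_pos m with rfl | hm
    · simp [h0]
    obtain ⟨L', hL'⟩ := (hstoch (1 / m)).exists_tendsto_pow
      fun i ↦ semigroup_diag_pos hcont h0 hadd hstoch _ i
    have hpow : α (1 / m) ^ m = α 1 := by
      rw [← map_natCast_mul_of_map_add h0 hadd, mul_one_div_cancel (by positivity)]
    have hsub : Tendsto (fun k ↦ m * k) atTop atTop :=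
      tendsto_atTop_mono (fun k ↦ Nat.le_mul_of_pos_left k hm) tendsto_id
    have hL'L : L' = L := tendsto_nhds_unique (hL'.comp hsub)
      (by rw [Function.comp_def]; simpa only [pow_mul, hpow] using hL)
    rw [← hL'L, ← mul_one_div, map_natCast_mul_of_map_add h0 hadd]
    exact pow_mul_eq_of_tendsto_pow hL' a
  exact (isClosed_eq (hcont.mul continuous_const) continuous_const).mem_of_tendsto
    (NNReal.tendsto_floor_mul_div_atTop c) (Eventually.of_forall fun m ↦ hrat _ m)

end IsStochastic

theorem ENNReal.denseRange_coe : DenseRange ((↑) : ℝ≥0 → ℝ≥0∞) :=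
  dense_of_exists_between fun _ _ h ↦
    let ⟨r, hr⟩ := ENNReal.lt_iff_exists_nnreal_btwn.1 h
    ⟨r, Set.mem_range_self r, hr⟩

theorem ENNReal.continuous_recTopCoe {X : Type*} [TopologicalSpace X] {f : ℝ≥0 → X} {L : X}
    (hf : Continuous f) (hL : Tendsto f atTop (𝓝 L)) :
    Continuous fun x : ℝ≥0∞ ↦ ENNReal.recTopCoe (C := fun _ ↦ X) L f x := by
  refine continuous_iff_continuousAt.2 fun x ↦ ?_
  induction x with
  | top =>
    refine nhds_top_basis.tendsto_left_iff.2 fun U hU ↦ ?_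
    obtain ⟨K, -, hK⟩ := atTop_basis.tendsto_left_iff.1 hL U hU
    refine ⟨K, ENNReal.coe_lt_top, fun x hx ↦ ?_⟩
    induction x with
    | top => exact mem_of_mem_nhds hU
    | coe t => exact hK (Set.mem_Ici.2 (ENNReal.coe_lt_coe.1 hx).le)
  | coe t => exact ENNReal.isOpenEmbedding_coe.continuousAt_iff.1 hf.continuousAt

theorem ENNReal.existsUnique_continuous_extension {X : Type*} [TopologicalSpace X] [T2Space X]
    {f : ℝ≥0 → X} {L : X} (hf : Continuous f) (hL : Tendsto f atTop (𝓝 L)) :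
    ∃! g : ℝ≥0∞ → X, Continuous g ∧ ∀ t : ℝ≥0, g t = f t :=
  ⟨_, ⟨ENNReal.continuous_recTopCoe hf hL, fun _ ↦ rfl⟩, fun _ ⟨hg, hgf⟩ ↦
    hg.ext_on ENNReal.denseRange_coe (ENNReal.continuous_recTopCoe hf hL)
      (by rintro _ ⟨t, rfl⟩; exact hgf t)⟩

theorem ENNReal.map_add_of_continuous {M : Type*} [Monoid M] [TopologicalSpace M]
    [ContinuousMul M] [T2Space M] {β : ℝ≥0∞ → M} (hβ : Continuous β)
    (hadd : ∀ s t : ℝ≥0, β (s + t) = β s * β t) (x y : ℝ≥0∞) : β (x + y) = β x * β y := by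
  have h := (hβ.comp continuous_add).ext_on
    (ENNReal.denseRange_coe.prodMap ENNReal.denseRange_coe)
    ((hβ.comp continuous_fst).mul (hβ.comp continuous_snd))
    (by rintro _ ⟨⟨s, t⟩, rfl⟩; exact hadd s t)
  exact congrFun h (x, y)

theorem markov_semigroup_extends_to_infty_general
    {n : Type*} [Fintype n] [DecidableEq n]
    (α : ℝ≥0 → Matrix n n ℝ)
    (hcont : Continuous α) (h0 : α 0 = 1)
    (hadd : ∀ s t : ℝ≥0, α (s + t) = α s * α t)
    (hstoch : ∀ t : ℝ≥0, IsStochastic (α t)) :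
    (∃! β : ℝ≥0∞ → Matrix n n ℝ, Continuous β ∧ ∀ t : ℝ≥0, β (↑t) = α t) ∧
      ∀ β : ℝ≥0∞ → Matrix n n ℝ, Continuous β → (∀ t : ℝ≥0, β (↑t) = α t) →
        (∀ x y : ℝ≥0∞, β (x + y) = β x * β y) ∧ β 0 = 1 := by
  obtain ⟨L, hL⟩ := (hstoch 1).exists_tendsto_pow
    fun i ↦ IsStochastic.semigroup_diag_pos hcont h0 hadd hstoch 1 i
  have hlim : Tendsto α atTop (𝓝 L) := tendsto_atTop_of_tendsto_pow_one hcont h0 hadd hL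
    (IsStochastic.semigroup_mul_eq_of_tendsto_pow hcont h0 hadd hstoch hL)
  refine ⟨ENNReal.existsUnique_continuous_extension hcont hlim, fun β hβ hβα ↦ ⟨?_, ?_⟩⟩
  · refine ENNReal.map_add_of_continuous hβ fun s t ↦ ?_
    rw [← ENNReal.coe_add, hβα, hβα, hβα, hadd]
  · rw [← ENNReal.coe_zero, hβα, h0]

theorem markov_semigroup_extends_to_infty
    {n : Type*} [Fintype n] [DecidableEq n] [Nonempty n]
    (α : ℝ≥0 → Matrix n n ℝ)
    (hcont : Continuous α) (h0 : α 0 = 1)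
    (hadd : ∀ s t : ℝ≥0, α (s + t) = α s * α t)
    (hstoch : ∀ t : ℝ≥0, IsStochastic (α t)) :
    (∃! β : ℝ≥0∞ → Matrix n n ℝ, Continuous β ∧ ∀ t : ℝ≥0, β (↑t) = α t) ∧
      ∀ β : ℝ≥0∞ → Matrix n n ℝ, Continuous β → (∀ t : ℝ≥0, β (↑t) = α t) →
        (∀ x y : ℝ≥0∞, β (x + y) = β x * β y) ∧ β 0 = 1 :=
  markov_semigroup_extends_to_infty_general α hcont h0 hadd hstoch
end

section
/- Let n be a nonempty finite type and α : ℝ≥0 → Matrix n n ℝ a Markov semigroup. Then there exists a probability distribution f : n → ℝ (i.e., f i ≥ 0 for all i and ∑ i, f i = 1) such that (α t).mulVec f = f for every t ∈ ℝ≥0. -/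
open scoped NNReal Nat
open Filter Topology Matrix

theorem map_nsmul_eq_pow_of_map_add {M R : Type*} [AddMonoid M] [Monoid R] {α : M → R}
    (h0 : α 0 = 1) (hadd : ∀ s t, α (s + t) = α s * α t) (m : ℕ) (s : M) :
    α (m • s) = α s ^ m := by
  induction m with
  | zero => simpa using h0
  | succ m ih => rw [succ_nsmul, hadd, ih, pow_succ]

namespace Matrix

variable {n : Type*} [Fintype n]

theorem pow_mulVec_eq_self [DecidableEq n] {R : Type*} [CommSemiring R] {A : Matrix n n R}
    {v : n → R} (h : A *ᵥ v = v) (m : ℕ) : (A ^ m) *ᵥ v = v := by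
  induction m with
  | zero => simp
  | succ m ih => rw [pow_succ, ← mulVec_mulVec, h, ih]

theorem abs_mulVec_le_mulVec_abs {m R : Type*} [Ring R] [LinearOrder R] [IsStrictOrderedRing R]
    {A : Matrix m n R} (hA : ∀ i j, 0 ≤ A i j) (v : n → R) : |A *ᵥ v| ≤ A *ᵥ |v| := fun i =>
  (Finset.abs_sum_le_sum_abs _ _).trans_eq
    (Finset.sum_congr rfl fun j _ => by rw [abs_mul, abs_of_nonneg (hA i j), Pi.abs_apply])

def stationaryDistributions (A : Matrix n n ℝ) : Set (n → ℝ) :=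
  stdSimplex ℝ n ∩ {f | A *ᵥ f = f}

theorem isCompact_stationaryDistributions (A : Matrix n n ℝ) :
    IsCompact A.stationaryDistributions :=
  (isCompact_stdSimplex ℝ n).inter_right
    (isClosed_eq (continuous_const.matrix_mulVec continuous_id) continuous_id)

theorem stationaryDistributions_subset_pow [DecidableEq n] (A : Matrix n n ℝ) (m : ℕ) :
    A.stationaryDistributions ⊆ (A ^ m).stationaryDistributions :=
  fun _ ⟨hf, hAf⟩ => ⟨hf, pow_mulVec_eq_self hAf m⟩

end Matrix

namespace IsStochastic

variable {n : Type*} [Fintype n] {A : Matrix n n ℝ}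

theorem one_vecMul (hA : IsStochastic A) : 1 ᵥ* A = 1 :=
  funext fun j => by simpa [vecMul, dotProduct] using hA.2 j

theorem sum_mulVec_s8 (hA : IsStochastic A) (v : n → ℝ) : ∑ i, (A *ᵥ v) i = ∑ i, v i := by
  rw [← one_dotProduct, dotProduct_mulVec, hA.one_vecMul, one_dotProduct]

theorem exists_ne_zero_mulVec_eq_self [Nonempty n] (hA : IsStochastic A) :
    ∃ v ≠ 0, A *ᵥ v = v := by
  classical
  have hdet : (A - 1).det = 0 := exists_vecMul_eq_zero_iff.1
    ⟨1, one_ne_zero, by rw [vecMul_sub, hA.one_vecMul, vecMul_one, sub_self]⟩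
  obtain ⟨v, hv, hAv⟩ := exists_mulVec_eq_zero_iff.2 hdet
  exact ⟨v, hv, by rwa [sub_mulVec, one_mulVec, sub_eq_zero] at hAv⟩

theorem mulVec_eq_self_of_le_mulVec (hA : IsStochastic A) {g : n → ℝ} (hg : g ≤ A *ᵥ g) :
    A *ᵥ g = g :=
  funext fun i => ((Finset.sum_eq_sum_iff_of_le fun i _ => hg i).1 (hA.sum_mulVec_s8 g).symm i
    (Finset.mem_univ i)).symm

theorem stationaryDistributions_nonempty [Nonempty n] (hA : IsStochastic A) :
    A.stationaryDistributions.Nonempty := by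
  obtain ⟨v, hv0, hAv⟩ := hA.exists_ne_zero_mulVec_eq_self
  have hfix : A *ᵥ |v| = |v| :=
    hA.mulVec_eq_self_of_le_mulVec (by simpa only [hAv] using abs_mulVec_le_mulVec_abs hA.1 v)
  obtain ⟨i, hi⟩ := Function.ne_iff.1 hv0
  have hpos : 0 < ∑ i, |v i| :=
    Finset.sum_pos' (fun i _ => abs_nonneg _) ⟨i, Finset.mem_univ i, abs_pos.2 hi⟩
  refine ⟨(∑ i, |v i|)⁻¹ • |v|, ⟨fun i => ?_, ?_⟩, show A *ᵥ _ = _ by rw [mulVec_smul, hfix]⟩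
  · exact mul_nonneg (inv_nonneg.2 hpos.le) (abs_nonneg _)
  · simp only [Pi.smul_apply, Pi.abs_apply, smul_eq_mul, ← Finset.mul_sum]
    exact inv_mul_cancel₀ hpos.ne'

end IsStochastic

theorem tendsto_floor_mul_factorial_div_factorial (t : ℝ≥0) :
    Tendsto (fun k : ℕ => (⌊t * k !⌋₊ : ℝ≥0) / k !) atTop (𝓝 t) := by
  rw [← NNReal.tendsto_coe]
  exact (tendsto_nat_floor_mul_div_atTop t.2).comp
    (tendsto_natCast_atTop_atTop.comp factorial_tendsto_atTop)

section MarkovSemigroup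

variable {n : Type*} [Fintype n] [DecidableEq n] {α : ℝ≥0 → Matrix n n ℝ}

theorem exists_forall_mem_stationaryDistributions_inv_factorial [Nonempty n]
    (h0 : α 0 = 1) (hadd : ∀ s t, α (s + t) = α s * α t) (hstoch : ∀ t, IsStochastic (α t)) :
    ∃ f, ∀ k : ℕ, f ∈ (α (k ! : ℝ≥0)⁻¹).stationaryDistributions := by
  have hanti : Antitone fun k : ℕ => (α (k ! : ℝ≥0)⁻¹).stationaryDistributions := by
    refine antitone_nat_of_succ_le fun k => ?_
    have hk : ((k ! : ℕ) : ℝ≥0)⁻¹ = (k + 1) • (((k + 1)! : ℕ) : ℝ≥0)⁻¹ := by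
      rw [Nat.factorial_succ, nsmul_eq_mul]
      push_cast
      field_simp
    rw [hk, map_nsmul_eq_pow_of_map_add h0 hadd]
    exact stationaryDistributions_subset_pow _ _
  simpa using IsCompact.nonempty_iInter_of_sequence_nonempty_isCompact_isClosed _
    (fun k => hanti k.le_succ) (fun _ => (hstoch _).stationaryDistributions_nonempty)
    (isCompact_stationaryDistributions _) fun _ => (isCompact_stationaryDistributions _).isClosed

theorem mulVec_eq_self_of_forall_inv_factorial (hcont : Continuous α) (h0 : α 0 = 1)
    (hadd : ∀ s t, α (s + t) = α s * α t) {f : n → ℝ}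
    (hf : ∀ k : ℕ, α (k ! : ℝ≥0)⁻¹ *ᵥ f = f) (t : ℝ≥0) : α t *ᵥ f = f := by
  have hclosed : IsClosed {s | α s *ᵥ f = f} :=
    isClosed_eq (hcont.matrix_mulVec continuous_const) continuous_const
  refine hclosed.mem_of_tendsto (tendsto_floor_mul_factorial_div_factorial t)
    (Eventually.of_forall fun k => ?_)
  change α (⌊t * k !⌋₊ / k !) *ᵥ f = f
  rw [div_eq_mul_inv, ← nsmul_eq_mul, map_nsmul_eq_pow_of_map_add h0 hadd]
  exact pow_mulVec_eq_self (hf k) _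

end MarkovSemigroup

theorem markov_semigroup_has_equilibrium
    {n : Type*} [Fintype n] [DecidableEq n] [Nonempty n]
    (α : ℝ≥0 → Matrix n n ℝ)
    (hcont : Continuous α) (h0 : α 0 = 1)
    (hadd : ∀ s t : ℝ≥0, α (s + t) = α s * α t)
    (hstoch : ∀ t : ℝ≥0, IsStochastic (α t)) :
    ∃ f : n → ℝ, (∀ i, 0 ≤ f i) ∧ (∑ i, f i = 1) ∧
      ∀ t : ℝ≥0, (α t).mulVec f = f := by
  obtain ⟨f, hf⟩ := exists_forall_mem_stationaryDistributions_inv_factorial h0 hadd hstoch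
  exact ⟨f, (hf 0).1.1, (hf 0).1.2,
    mulVec_eq_self_of_forall_inv_factorial hcont h0 hadd fun k => (hf k).2⟩
end
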